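/- For every integer n ≥ 0, every integer k, and every real a > 0, the Hurwitz type poly-Bernoulli numbers satisfy B_{n,a}^{(k)} = ∑_{m=0}^{n} (−1)^{n+m} · m! · S(n,m)/(m+a)^k = (−1)^n ∑_{m=0}^{n} (−1)^m m! S(n,m)/(m+a)^k, where S(n,m) denotes the Stirling number of the second kind. -/

import Mathlib

open Nat Finset

/-- The Hurwitz–Lerch zeta function `Φ(z,k,a) = ∑_{m≥0} z^m/(m+a)^k`. -/
noncomputable def hlZeta (z : ℝ) (k : ℤ) (a : ℝ) : ℝ :=
  ∑' m : ℕ, z ^ m / ((m : ℝ) + a) ^ k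

/-- Stirling numbers of the second kind. -/
def stirling2 : ℕ → ℕ → ℕ
  | 0, 0 => 1
  | 0, _ + 1 => 0
  | _ + 1, 0 => 0
  | n + 1, k + 1 => (k + 1) * stirling2 n (k + 1) + stirling2 n k

/-!
Writing `m! S(n,m) = Δ^m (x ↦ x^n) (0)` and applying `Δ^m` to the exponential generating function
`e^{xt}` of the powers gives `∑ₙ m! S(n,m) tⁿ/n! = (eᵗ - 1)^m`. Hence
`Φ(1 - e^{-t}, k, a) = ∑ₘ (-1)^m (e^{-t} - 1)^m / (m+a)^k` is a double series in `m` and `n`, which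
converges absolutely for `|t| < log 2`; summing it by columns gives a power series in `t` with the
claimed coefficients. Two power series agreeing on a punctured neighbourhood of `0` have the same
coefficients, by the isolated zeros principle.
-/

open fwdDiff Real Filter Topology

theorem stirling2_eq_stirlingSecond : stirling2 = Nat.stirlingSecond := by
  funext n m
  induction n generalizing m with
  | zero => cases m <;> rfl
  | succ n ih => cases m <;> simp [stirling2, Nat.stirlingSecond_succ_succ, ih]

section ForwardDifference

variable {R : Type*} [CommRing R]

theorem fwdDiff_iter_succ_id_mul (g : R → R) (N : ℕ) (y : R) :
    Δ_[1] ^[N + 1] (fun x ↦ x * g x) y =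
      y * Δ_[1] ^[N + 1] g y + (N + 1) * Δ_[1] ^[N] g (y + 1) := by
  induction N generalizing y with
  | zero =>
    simp only [zero_add, Function.iterate_one, Function.iterate_zero_apply, fwdDiff, Nat.cast_zero]
    ring
  | succ N ih =>
    rw [Function.iterate_succ_apply', fwdDiff, ih, ih, Function.iterate_succ_apply' _ (N + 1),
      fwdDiff, Function.iterate_succ_apply' _ N, fwdDiff]
    push_cast
    ring

theorem factorial_mul_stirlingSecond_eq_fwdDiff_iter (n m : ℕ) :
    (m ! : R) * Nat.stirlingSecond n m = Δ_[1] ^[m] (fun x : R ↦ x ^ n) 0 := by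
  induction n generalizing m with
  | zero =>
    cases m with
    | zero => simp
    | succ m => simp [Function.iterate_fixed]
  | succ n ih =>
    cases m with
    | zero => simp
    | succ m =>
      have hshift : Δ_[1] ^[m] (fun x : R ↦ x ^ n) (0 + 1) =
          Δ_[1] ^[m] (fun x : R ↦ x ^ n) 0 + Δ_[1] ^[m + 1] (fun x : R ↦ x ^ n) 0 := by
        rw [Function.iterate_succ_apply', fwdDiff]
        ring
      have hpow : (fun x : R ↦ x ^ (n + 1)) = fun x ↦ x * x ^ n := funext fun x ↦ pow_succ' x n
      rw [hpow, fwdDiff_iter_succ_id_mul, hshift, ← ih, ← ih, Nat.stirlingSecond_succ_succ,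
        Nat.factorial_succ]
      push_cast
      ring

end ForwardDifference

theorem fwdDiff_iter_exp_mul (m : ℕ) (t : ℝ) :
    Δ_[1] ^[m] (fun x ↦ exp (x * t)) = fun x ↦ (exp t - 1) ^ m * exp (x * t) := by
  induction m with
  | zero => simp
  | succ m ih =>
    rw [Function.iterate_succ_apply', ih]
    funext x
    simp only [fwdDiff, add_mul, one_mul, exp_add]
    ring

theorem hasSum_fwdDiff_iter_pow (m : ℕ) (y t : ℝ) :
    HasSum (fun n ↦ Δ_[1] ^[m] (fun x : ℝ ↦ x ^ n) y * t ^ n / n !)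
      (Δ_[1] ^[m] (fun x ↦ exp (x * t)) y) := by
  simp only [fwdDiff_iter_eq_sum_shift, Finset.sum_mul, Finset.sum_div]
  refine hasSum_sum fun j _ ↦ ?_
  simp only [zsmul_eq_mul, mul_assoc, mul_div_assoc]
  refine HasSum.mul_left _ ?_
  simpa [Real.exp_eq_exp_ℝ, mul_pow, mul_div_assoc] using
    NormedSpace.expSeries_div_hasSum_exp ((y + j) * t)

theorem hasSum_factorial_mul_stirlingSecond (m : ℕ) (t : ℝ) :
    HasSum (fun n ↦ m ! * (Nat.stirlingSecond n m : ℝ) * t ^ n / n !) ((exp t - 1) ^ m) := by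
  simpa [factorial_mul_stirlingSecond_eq_fwdDiff_iter, fwdDiff_iter_exp_mul] using
    hasSum_fwdDiff_iter_pow m 0 t

theorem hasSum_sum_mul_stirlingSecond (w : ℕ → ℝ) {t : ℝ}
    (hw : Summable fun m ↦ |w m| * (exp |t| - 1) ^ m) :
    HasSum (fun n ↦ (∑ m ∈ range (n + 1), w m * m ! * Nat.stirlingSecond n m) * t ^ n / n !)
      (∑' m, w m * (exp t - 1) ^ m) := by
  set F : ℕ × ℕ → ℝ := fun p ↦ w p.1 * (p.1 ! * Nat.stirlingSecond p.2 p.1 * t ^ p.2 / p.2 !)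
  have hrow (m : ℕ) : HasSum (fun n ↦ F (m, n)) (w m * (exp t - 1) ^ m) :=
    (hasSum_factorial_mul_stirlingSecond m t).mul_left (w m)
  have hrow_abs (m : ℕ) : HasSum (fun n ↦ |F (m, n)|) (|w m| * (exp |t| - 1) ^ m) := by
    simpa [F, abs_mul, abs_div] using (hasSum_factorial_mul_stirlingSecond m |t|).mul_left |w m|
  have hF : Summable F :=
    .of_abs <| (summable_prod_of_nonneg fun _ ↦ abs_nonneg _).2
      ⟨fun m ↦ (hrow_abs m).summable, hw.congr fun m ↦ (hrow_abs m).tsum_eq.symm⟩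
  have hcol (n : ℕ) : HasSum (fun m ↦ F (m, n))
      ((∑ m ∈ range (n + 1), w m * m ! * Nat.stirlingSecond n m) * t ^ n / n !) := by
    have hvanish : ∀ m ∉ range (n + 1), F (m, n) = 0 := fun m hm ↦ by
      simp [F, Nat.stirlingSecond_eq_zero_of_lt (by simpa using hm : n < m)]
    have hterm (m : ℕ) : w m * m ! * Nat.stirlingSecond n m * t ^ n / n ! = F (m, n) := by
      simp only [F]
      ring
    rw [sum_mul, sum_div, sum_congr rfl fun m _ ↦ hterm m]
    exact hasSum_sum_of_ne_finset_zero hvanish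
  rw [(hF.hasSum.prod_fiberwise hrow).tsum_eq]
  exact ((Equiv.prodComm ℕ ℕ).hasSum_iff.mpr hF.hasSum).prod_fiberwise hcol

theorem summable_pow_div_add_zpow (k : ℤ) {a r : ℝ} (ha : 0 < a) (hr0 : 0 < r) (hr1 : r < 1) :
    Summable fun m : ℕ ↦ r ^ m / ((m : ℝ) + a) ^ k := by
  have hpos (m : ℕ) : 0 < r ^ m / ((m : ℝ) + a) ^ k := by positivity
  refine summable_of_ratio_test_tendsto_lt_one hr1 (.of_forall fun m ↦ (hpos m).ne') ?_
  have hquot : Tendsto (fun m : ℕ ↦ (a + 1 * m) / ((a + 1) + 1 * m)) atTop (𝓝 1) := by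
    simpa using tendsto_add_mul_div_add_mul_atTop_nhds a (a + 1) (1 : ℝ) one_ne_zero
  have hlim := ((continuousAt_zpow₀ 1 k (.inl one_ne_zero)).tendsto.comp hquot).const_mul r
  rw [one_zpow, mul_one] at hlim
  refine hlim.congr fun m ↦ ?_
  rw [Real.norm_of_nonneg (hpos _).le, Real.norm_of_nonneg (hpos _).le, Function.comp_apply,
    div_zpow]
  push_cast
  field_simp
  ring_nf

theorem eq_zero_of_hasSum_mul_pow_eq_zero {𝕜 : Type*} [NontriviallyNormedField 𝕜]
    [CompleteSpace 𝕜] {c : ℕ → 𝕜} {ε : ℝ} (hε : 0 < ε)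
    (h : ∀ t : 𝕜, t ≠ 0 → ‖t‖ < ε → HasSum (fun n ↦ c n * t ^ n) 0) : c = 0 := by
  set p := FormalMultilinearSeries.ofScalars 𝕜 c
  have hp (t : 𝕜) (n : ℕ) : p n (fun _ ↦ t) = c n * t ^ n := by
    simp [p, mul_comm]
  obtain ⟨t₀, ht₀, ht₀ε⟩ := NormedField.exists_norm_lt 𝕜 hε
  have hradius : 0 < p.radius := by
    refine lt_of_lt_of_le (by simpa using ht₀) (p.le_radius_of_tendsto (r := ‖t₀‖₊) (l := 0) ?_)
    simpa [p, FormalMultilinearSeries.ofScalars_norm, norm_mul, norm_pow] using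
      (h t₀ (norm_pos_iff.mp ht₀) ht₀ε).summable.tendsto_atTop_zero.norm
  have hsum : HasFPowerSeriesAt p.sum p 0 := (p.hasFPowerSeriesOnBall hradius).hasFPowerSeriesAt
  have hvanish : ∀ᶠ t in 𝓝[≠] (0 : 𝕜), p.sum t = 0 := by
    filter_upwards [self_mem_nhdsWithin, nhdsWithin_le_nhds (Metric.ball_mem_nhds 0 hε)]
      with t ht htε
    simpa [FormalMultilinearSeries.sum, hp] using (h t ht (by simpa using htε)).tsum_eq
  have hp0 : p = 0 := by
    by_contra hne
    obtain ⟨t, ht0, htne⟩ := (hvanish.and (hsum.locally_ne_zero hne)).exists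
    exact htne ht0
  funext n
  exact (FormalMultilinearSeries.ofScalars_eq_zero 𝕜 n).mp (congrArg (· n) hp0)

theorem hasSum_hlZeta_one_sub_exp_neg (k : ℤ) {a t : ℝ} (ha : 0 < a) (ht0 : t ≠ 0)
    (ht : |t| < Real.log 2) :
    HasSum (fun n ↦ (∑ m ∈ range (n + 1),
        (-1 : ℝ) ^ (n + m) * m ! * Nat.stirlingSecond n m / ((m : ℝ) + a) ^ k) * t ^ n / n !)
      (hlZeta (1 - exp (-t)) k a) := by
  have hr0 : 0 < exp |t| - 1 := by simpa using abs_pos.mpr ht0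
  have hr1 : exp |t| - 1 < 1 := by linarith [(exp_lt_exp.mpr ht).trans_eq (exp_log two_pos)]
  set w : ℕ → ℝ := fun m ↦ (-1) ^ m / ((m : ℝ) + a) ^ k
  have hw : Summable fun m ↦ |w m| * (exp |-t| - 1) ^ m := by
    refine (summable_pow_div_add_zpow k ha hr0 hr1).congr fun m ↦ ?_
    simp only [w, abs_div, abs_pow, abs_neg, abs_one, one_pow, one_div,
      abs_of_pos (zpow_pos (by positivity : (0 : ℝ) < m + a) k)]
    ring
  convert hasSum_sum_mul_stirlingSecond w hw using 1
  · funext n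
    rw [neg_pow, sum_mul, sum_mul, sum_div, sum_div]
    refine sum_congr rfl fun m _ ↦ ?_
    simp only [w, pow_add]
    ring
  · refine tsum_congr fun m ↦ ?_
    simp only [w]
    rw [div_mul_eq_mul_div, ← mul_pow]
    ring_nf

/-- the Hurwitz type poly-Bernoulli numbers (with e.g.f. `Φ(1−e^{−t},k,a)`) satisfy
`B_{n,a}^{(k)} = ∑_{m=0}^{n} (−1)^{n+m} m! S(n,m)/(m+a)^k
             = (−1)^n ∑_{m=0}^{n} (−1)^m m! S(n,m)/(m+a)^k`. -/
theorem statement16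
    (k : ℤ) (a : ℝ) (ha : 0 < a)
    (B : ℕ → ℝ)
    (hB : ∃ ε > 0, ∀ t : ℝ, t ≠ 0 → |t| < ε →
      HasSum (fun n : ℕ => B n * t ^ n / (n ! : ℝ))
        (hlZeta (1 - Real.exp (-t)) k a))
    (n : ℕ) :
    B n = ∑ m ∈ Finset.range (n + 1),
        (-1 : ℝ) ^ (n + m) * (m ! : ℝ) * (stirling2 n m : ℝ) / ((m : ℝ) + a) ^ k ∧
    B n = (-1 : ℝ) ^ n * ∑ m ∈ Finset.range (n + 1),
        (-1 : ℝ) ^ m * (m ! : ℝ) * (stirling2 n m : ℝ) / ((m : ℝ) + a) ^ k := by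
  obtain ⟨ε, hε, hB⟩ := hB
  set C : ℕ → ℝ := fun n ↦ ∑ m ∈ range (n + 1),
    (-1 : ℝ) ^ (n + m) * m ! * Nat.stirlingSecond n m / ((m : ℝ) + a) ^ k
  have hdiff : (fun n ↦ (B n - C n) / n !) = 0 := by
    refine eq_zero_of_hasSum_mul_pow_eq_zero (lt_min hε (Real.log_pos one_lt_two))
      fun t ht0 ht ↦ ?_
    rw [Real.norm_eq_abs, lt_min_iff] at ht
    have h := (hB t ht0 ht.1).sub (hasSum_hlZeta_one_sub_exp_neg k ha ht0 ht.2)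
    rw [sub_self] at h
    exact h.congr_fun fun n ↦ by ring
  have hBC : B n = C n :=
    sub_eq_zero.mp ((div_eq_zero_iff.mp (congrFun hdiff n)).resolve_right (by positivity))
  rw [stirling2_eq_stirlingSecond]
  refine ⟨hBC, hBC.trans ?_⟩
  rw [mul_sum]
  exact sum_congr rfl fun m _ ↦ by ring
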